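/- With T_0, T_1,...,T_n and T_{n+1} = T_n^{μ_p} as in the iterative construction from a finite p-cyclically monotone operator {(x_i,x_i*)}_{i=1}^n, for every k = 1,...,n one has T_{n+1}(x_k) = T_n(x_k). -/

import Mathlib

open scoped BigOperators RealInnerProductSpace

/-- The cyclic sum `∑_{i=0}^{p} ⟨x_{i+1} - x_i, x_i*⟩` (indices mod `p+1`),
in a real Hilbert space identified with its dual. -/
def cycSumH {X : Type*} [NormedAddCommGroup X] [InnerProductSpace ℝ X] (p : ℕ)
    (z : Fin (p + 1) → X × X) : ℝ :=
  ∑ i, ⟪(z (i + 1)).1 - (z i).1, (z i).2⟫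

/-- `T` (identified with its graph) is `p`-cyclically monotone. -/
def CycMonoH {X : Type*} [NormedAddCommGroup X] [InnerProductSpace ℝ X] (p : ℕ)
    (T : Set (X × X)) : Prop :=
  ∀ z : Fin (p + 1) → X × X, (∀ i, z i ∈ T) → cycSumH p z ≤ 0

/-- The `p`-cyclically monotone polar of `T`. -/
def cycPolarH {X : Type*} [NormedAddCommGroup X] [InnerProductSpace ℝ X] (p : ℕ)
    (T : Set (X × X)) : Set (X × X) :=
  {w | ∀ z : Fin (p + 1) → X × X,
    z 0 = w → (∀ i, i ≠ 0 → z i ∈ T) → cycSumH p z ≤ 0}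

/-- Domain of a multivalued operator (graph). -/
def opDom {X Y : Type*} (T : Set (X × Y)) : Set X := {x | ∃ y, (x, y) ∈ T}

/-- Range of a multivalued operator (graph). -/
def opRan {X Y : Type*} (T : Set (X × Y)) : Set Y := {y | ∃ x, (x, y) ∈ T}

/-- Image of a multivalued operator (graph) at a point. -/
def opIm {X Y : Type*} (T : Set (X × Y)) (x : X) : Set Y := {y | (x, y) ∈ T}

/-!
Adjoining to a `p`-cyclically monotone `T` the points of its polar lying over a single `a` keeps
it `p`-cyclically monotone: rotate a cycle so that it starts at a new point and cut it at every
new point; since all of them lie over `a`, the pieces are closed paths that start at a point of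
the polar and otherwise run through `T`, so each has nonpositive sum. Hence every `T_k` is
`p`-cyclically monotone and `T_n ⊆ T_n^{μ_p}`. Conversely `T_n^{μ_p}` is contained in the polar
of the operator to which the fiber over `x_k` was adjoined, since that operator lies in `T_n`.
-/

lemma mem_singleton_prod_opIm {α β : Type*} {P : Set (α × β)} {a : α} {b : α × β} :
    b ∈ {a} ×ˢ opIm P a ↔ b.1 = a ∧ b ∈ P := by
  obtain ⟨b₁, b₂⟩ := b
  simp only [Set.mem_prod, Set.mem_singleton_iff, opIm]
  exact ⟨fun ⟨h, hb⟩ => ⟨h, h ▸ hb⟩, fun ⟨h, hb⟩ => ⟨h, h ▸ hb⟩⟩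

section CyclicSums

variable {X : Type*} [NormedAddCommGroup X] [InnerProductSpace ℝ X] {p : ℕ}

def pathSum (e : X) : X × X → List (X × X) → ℝ
  | c, [] => ⟪e - c.1, c.2⟫
  | c, x :: t => ⟪x.1 - c.1, c.2⟫ + pathSum e x t

@[simp] lemma pathSum_nil (e : X) (c : X × X) : pathSum e c [] = ⟪e - c.1, c.2⟫ := rfl

@[simp] lemma pathSum_cons (e : X) (c x : X × X) (t : List (X × X)) :
    pathSum e c (x :: t) = ⟪x.1 - c.1, c.2⟫ + pathSum e x t := rfl

lemma pathSum_append_cons (e : X) (b : X × X) (l₂ : List (X × X)) :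
    ∀ (c : X × X) (l₁ : List (X × X)),
      pathSum e c (l₁ ++ b :: l₂) = pathSum b.1 c l₁ + pathSum e b l₂
  | _, [] => rfl
  | c, x :: t => by
    rw [List.cons_append, pathSum_cons, pathSum_cons, pathSum_append_cons e b l₂ x t, add_assoc]

lemma pathSum_append_replicate_getLastD (e : X) (k : ℕ) :
    ∀ (c : X × X) (l : List (X × X)),
      pathSum e c (l ++ List.replicate k (l.getLastD c)) = pathSum e c l
  | c, [] => by
    induction k with
    | zero => rfl
    | succ k ih => simpa [List.replicate_succ] using ih
  | c, x :: t => by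
    rw [List.getLastD_cons, List.cons_append, pathSum_cons, pathSum_cons,
      pathSum_append_replicate_getLastD e k x t]

lemma pathSum_ofFn (e : X) :
    ∀ {m : ℕ} (f : Fin (m + 1) → X × X),
      pathSum e (f 0) (List.ofFn fun i : Fin m => f i.succ) =
        ∑ i : Fin m, ⟪(f i.succ).1 - (f i.castSucc).1, (f i.castSucc).2⟫ +
          ⟪e - (f (Fin.last m)).1, (f (Fin.last m)).2⟫
  | 0, f => by simp
  | m + 1, f => by
    rw [List.ofFn_succ, pathSum_cons, Fin.sum_univ_succ,
      pathSum_ofFn e (fun i => f i.succ)]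
    simp only [Fin.succ_zero_eq_one, Fin.succ_last, Fin.succ_castSucc, Fin.castSucc_zero]
    ring

lemma cycSumH_eq_pathSum (z : Fin (p + 1) → X × X) :
    cycSumH p z = pathSum (z 0).1 (z 0) (List.ofFn fun i : Fin p => z i.succ) := by
  rw [pathSum_ofFn, cycSumH, Fin.sum_univ_castSucc, Fin.last_add_one]
  simp only [Fin.coeSucc_eq_succ]

lemma cycSumH_comp_add_right (z : Fin (p + 1) → X × X) (j : Fin (p + 1)) :
    cycSumH p (fun i => z (i + j)) = cycSumH p z :=
  Fintype.sum_equiv (Equiv.addRight j) _ _ fun i => by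
    simp only [Equiv.coe_addRight, add_right_comm]

lemma cycPolarH_anti {S T : Set (X × X)} (h : S ⊆ T) : cycPolarH p T ⊆ cycPolarH p S :=
  fun _ hw z hz₀ hz => hw z hz₀ fun i hi => h (hz i hi)

lemma CycMonoH.subset_cycPolarH {T : Set (X × X)} (hT : CycMonoH p T) : T ⊆ cycPolarH p T := by
  intro w hw z hz₀ hz
  refine hT z fun i => ?_
  rcases eq_or_ne i 0 with rfl | hi
  · exact hz₀ ▸ hw
  · exact hz i hi

lemma pathSum_nonpos_of_mem_cycPolarH {T : Set (X × X)} {c : X × X} (hc : c ∈ cycPolarH p T)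
    {l : List (X × X)} (hlT : ∀ x ∈ l, x ∈ T) (hlp : l.length ≤ p) : pathSum c.1 c l ≤ 0 := by
  have of_length_eq : ∀ l : List (X × X), (∀ x ∈ l, x ∈ T) → l.length = p →
      pathSum c.1 c l ≤ 0 := by
    rintro l hlT rfl
    have hcons := hc (Fin.cons c l.get) rfl fun i hi => by
      obtain ⟨j, rfl⟩ := Fin.exists_succ_eq.mpr hi
      exact hlT _ (l.get_mem j)
    simpa [cycSumH_eq_pathSum] using hcons
  rcases l with _ | ⟨x, t⟩
  · simp
  -- pad the path to length `p` by repeating its last point, which adds only zero terms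
  rw [← pathSum_append_replicate_getLastD c.1 (p - (x :: t).length)]
  refine of_length_eq _ (fun y hy => ?_) (by simp at hlp ⊢; omega)
  rcases List.mem_append.mp hy with hy | hy
  · exact hlT y hy
  · rw [List.eq_of_mem_replicate hy, List.getLastD_cons]
    exact hlT _ List.getLastD_mem_cons

lemma pathSum_nonpos_of_mem_union {T : Set (X × X)} {a : X} (l : List (X × X)) {c : X × X}
    (hc : c ∈ cycPolarH p T) (hca : c.1 = a)
    (hl : ∀ x ∈ l, x ∈ {a} ×ˢ opIm (cycPolarH p T) a ∪ T) (hlp : l.length ≤ p) :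
    pathSum a c l ≤ 0 := by
  induction hn : l.length using Nat.strong_induction_on generalizing l c with
  | _ n ih =>
  subst hca hn
  by_cases hS : ∃ b ∈ l, b ∈ {c.1} ×ˢ opIm (cycPolarH p T) c.1
  · obtain ⟨b, hbl, hbS⟩ := hS
    obtain ⟨hba, hb⟩ := mem_singleton_prod_opIm.mp hbS
    obtain ⟨l₁, l₂, rfl⟩ := List.append_of_mem hbl
    have hlen : (l₁ ++ b :: l₂).length = l₁.length + l₂.length + 1 := by simp; omega
    have h₁ := ih _ (by omega) l₁ hc rfl (fun x hx => hl x (by simp [hx])) (by omega) rfl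
    have h₂ := ih _ (by omega) l₂ hb hba (fun x hx => hl x (by simp [hx])) (by omega) rfl
    rw [pathSum_append_cons, hba]
    linarith
  · push Not at hS
    exact pathSum_nonpos_of_mem_cycPolarH hc (fun x hx => (hl x hx).resolve_left (hS x hx)) hlp

lemma CycMonoH.union_singleton_prod_opIm {T : Set (X × X)} (hT : CycMonoH p T) (a : X) :
    CycMonoH p ({a} ×ˢ opIm (cycPolarH p T) a ∪ T) := by
  intro z hz
  by_cases hS : ∃ j, z j ∈ {a} ×ˢ opIm (cycPolarH p T) a
  · obtain ⟨j, hj⟩ := hS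
    obtain ⟨hja, hjP⟩ := mem_singleton_prod_opIm.mp hj
    rw [← cycSumH_comp_add_right z j, cycSumH_eq_pathSum, zero_add, hja]
    refine pathSum_nonpos_of_mem_union _ hjP hja (fun x hx => ?_) (by simp)
    obtain ⟨i, rfl⟩ := List.mem_ofFn.mp hx
    exact hz _
  · push Not at hS
    exact hT z fun i => (hz i).resolve_left (hS i)

end CyclicSums

theorem construction_fiber_eq {X : Type*} [NormedAddCommGroup X] [InnerProductSpace ℝ X]
    (p n : ℕ) (w : Fin n → X × X) (T : ℕ → Set (X × X))
    (hmono : CycMonoH p (Set.range w))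
    (hT0 : T 0 = Set.range w)
    (hTk : ∀ k : Fin n, T ((k : ℕ) + 1) =
      ({(w k).1} ×ˢ opIm (cycPolarH p (T (k : ℕ))) (w k).1) ∪ T (k : ℕ))
    (hTn1 : T (n + 1) = cycPolarH p (T n)) :
    ∀ k : Fin n, opIm (T (n + 1)) (w k).1 = opIm (T n) (w k).1 := by
  have hT_mono : MonotoneOn T (Set.Iic n) :=
    monotoneOn_of_le_succ Set.ordConnected_Iic fun k _ _ hk => by
      rw [Order.succ_eq_add_one] at hk ⊢
      rw [hTk ⟨k, hk⟩]
      exact Set.subset_union_right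
  have hT_cycMono : ∀ k ≤ n, CycMonoH p (T k) := by
    intro k
    induction k with
    | zero => exact fun _ => hT0 ▸ hmono
    | succ k ih =>
      intro hk
      rw [hTk ⟨k, hk⟩]
      exact (ih (by omega)).union_singleton_prod_opIm _
  intro k
  rw [hTn1]
  refine Set.Subset.antisymm (fun y hy => ?_) fun y hy =>
    (hT_cycMono n le_rfl).subset_cycPolarH hy
  have hy_k : ((w k).1, y) ∈ cycPolarH p (T k) :=
    cycPolarH_anti (hT_mono (Set.mem_Iic.mpr k.is_le') Set.self_mem_Iic k.is_le') hy
  have hy_succ : ((w k).1, y) ∈ T (k + 1) := by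
    rw [hTk k]
    exact Or.inl (mem_singleton_prod_opIm.mpr ⟨rfl, hy_k⟩)
  exact hT_mono (Set.mem_Iic.mpr k.is_lt) Set.self_mem_Iic k.is_lt hy_succ
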